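/- For the homogeneous tree T^n of branching number n and any real t ∈ [0, c_p(∂T^n)], there exists a compact subset K_t ⊆ ∂T^n with c_p(K_t) = t. -/

import Mathlib

/-!
Code the boundary of `T^n` by sequences `ω : ℕ → Fin n` and read a code as the base-`(n + 1)`
expansion `v ω = 0.ω₀ω₁ω₂…`; since the digit `n` never occurs, `v` is a continuous injection
into `ℝ`. The compacts `K_x = {ζ : v (code ζ) ≤ x}` increase from `∅` to `∂T^n`, and
`x ↦ c_p(K_x)` is continuous: from the right because the capacity is continuous along decreasing
compacts, from the left because the compacts `{x - ε ≤ v ≤ x}` shrink to a single point, which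
has capacity zero, and the capacity is subadditive. The intermediate value theorem concludes.
-/

open scoped ENNReal
open MeasureTheory

/-- A locally finite rooted tree, given by its set of edges. The root edge has no parent,
every other edge has a parent, and every edge has finitely many children. -/
structure RTree where
  E : Type
  root : E
  parent : E → Option E
  parent_root : parent root = none
  parent_isSome : ∀ α, α ≠ root → (parent α).isSome
  level : E → ℕ
  level_root : level root = 0
  level_parent : ∀ α β, parent α = some β → level α = level β + 1
  locFin : ∀ α, {β | parent β = some α}.Finite

namespace RTree

variable (T : RTree)

/-- `Le T α β` : the edge `α` is an ancestor of (or equal to) the edge `β`,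
i.e. `α ≤ β` in the natural partial order on edges. -/
def Le (α β : T.E) : Prop :=
  Relation.ReflTransGen (fun x y => T.parent y = some x) α β

/-- The boundary of `T`: half-infinite geodesics starting at the root edge. -/
structure Boundary where
  seq : ℕ → T.E
  seq_zero : seq 0 = T.root
  seq_parent : ∀ n, T.parent (seq (n + 1)) = some (seq n)

/-- The boundary `∂T_α` of the tent over the edge `α`: boundary points whose
geodesic passes through `α`. -/
def tentB (α : T.E) : Set T.Boundary := {ζ | ∃ n, ζ.seq n = α}

/-- The standard topology on the boundary, with the tent boundaries as a basis. -/
def ttop : TopologicalSpace T.Boundary :=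
  TopologicalSpace.generateFrom {s | ∃ α, s = T.tentB α}

/-- The Borel σ-algebra on the boundary. -/
def tborel : MeasurableSpace T.Boundary := @borel _ T.ttop

/-- The set of edges of the tent `T_α`. -/
def tentE (α : T.E) : Set T.E := {β | T.Le α β}

/-- The relative potential `I_α f (ζ)`, summing `f` over the edges of the geodesic
from the root to `ζ` that lie in the tent `T_α`.  Taking `α` to be the root edge
gives the potential `If`. -/
noncomputable def relPot (α : T.E) (f : T.E → ℝ≥0∞) (ζ : T.Boundary) : ℝ≥0∞ :=
  ∑' n, Set.indicator (T.tentE α) f (ζ.seq n)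

/-- The relative `p`-energy `‖f‖_{ℓ^p(E(T_α))}^p`. -/
noncomputable def relEnergy (p : ℝ) (α : T.E) (f : T.E → ℝ≥0∞) : ℝ≥0∞ :=
  ∑' β, Set.indicator (T.tentE α) (fun γ => f γ ^ p) β

/-- The relative `p`-capacity `c_{p,α}(E)` of `E ⊆ ∂T`, with the tent `T_α`
as ambient tree. -/
noncomputable def relCap (p : ℝ) (α : T.E) (E : Set T.Boundary) : ℝ≥0∞ :=
  ⨅ f ∈ {f : T.E → ℝ≥0∞ | ∀ ζ ∈ E, 1 ≤ T.relPot α f ζ}, T.relEnergy p α f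

/-- The `p`-capacity of a subset of the boundary. -/
noncomputable def cap (p : ℝ) (E : Set T.Boundary) : ℝ≥0∞ := T.relCap p T.root E

end RTree

open RTree

open Filter Topology

namespace Real

theorem ofDigits_lt_one {b : ℕ} {x : ℕ → Fin (b + 1)} (hx : ∀ i, x i ≠ Fin.last b) :
    ofDigits x < 1 := by
  have : NeZero b := ⟨by rintro rfl; exact hx 0 (Subsingleton.elim (α := Fin 1) _ _)⟩
  rw [← ofDigits_const_last_eq_one b]
  refine Summable.tsum_lt_tsum (i := 0) (fun i => ?_) ?_ summable_ofDigitsTerm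
    summable_ofDigitsTerm
  · unfold ofDigitsTerm
    gcongr
    exact_mod_cast Fin.le_last (x i)
  · unfold ofDigitsTerm
    gcongr
    exact_mod_cast Fin.lt_last_iff_ne_last.mpr (hx 0)

theorem ofDigits_lt_ofDigits {b : ℕ} {x y : ℕ → Fin (b + 1)} {k : ℕ}
    (hxy : ∀ i < k, x i = y i) (hk : x k < y k) (hx : ∀ i, x i ≠ Fin.last b) :
    ofDigits x < ofDigits y := by
  rw [ofDigits_eq_sum_add_ofDigits x (k + 1), ofDigits_eq_sum_add_ofDigits y (k + 1),
    Finset.sum_range_succ, Finset.sum_range_succ,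
    Finset.sum_congr rfl fun i hi => by rw [ofDigitsTerm, hxy i (Finset.mem_range.mp hi)]]
  have htail_x := ofDigits_lt_one (x := fun i => x (i + (k + 1))) fun i => hx _
  have htail_y := ofDigits_nonneg fun i => y (i + (k + 1))
  have hdigit : ((x k : ℕ) : ℝ) + 1 ≤ (y k : ℕ) := by exact_mod_cast hk
  have hB : 0 < (((b + 1 : ℕ) : ℝ) ^ (k + 1))⁻¹ := by positivity
  simp only [ofDigitsTerm]
  nlinarith

theorem injective_ofDigits_castSucc (n : ℕ) :
    Function.Injective fun ω : ℕ → Fin n => ofDigits fun i => (ω i).castSucc := by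
  have hmono :
      StrictMono fun ω : Lex (ℕ → Fin n) => ofDigits fun i => (ofLex ω i).castSucc := by
    rintro ω ω' ⟨k, hagree, hk⟩
    exact ofDigits_lt_ofDigits (fun i hi => by simp [hagree i hi])
      (Fin.castSucc_lt_castSucc_iff.mpr hk) fun i => (Fin.castSucc_lt_last _).ne
  exact hmono.injective.comp toLex.injective

theorem continuous_ofDigits_castSucc (n : ℕ) :
    Continuous fun ω : ℕ → Fin n => ofDigits fun i => (ω i).castSucc :=
  continuous_ofDigits.comp <| continuous_pi fun i =>
    continuous_of_discreteTopology.comp (continuous_apply i)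

end Real

theorem Monotone.continuous_of_sSup_Iio_of_sInf_Ioi {α β : Type*} [LinearOrder α]
    [TopologicalSpace α] [OrderTopology α] [CompleteLinearOrder β] [TopologicalSpace β]
    [OrderTopology β] {f : α → β} (hf : Monotone f) (hleft : ∀ x, sSup (f '' Set.Iio x) = f x)
    (hright : ∀ x, sInf (f '' Set.Ioi x) = f x) : Continuous f := by
  refine continuous_iff_continuousAt.mpr fun x =>
    continuousAt_iff_continuous_left_right.mpr ⟨?_, ?_⟩
  · rw [← continuousWithinAt_Iio_iff_Iic, ContinuousWithinAt, ← hleft x]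
    exact hf.tendsto_nhdsLT x
  · rw [← continuousWithinAt_Ioi_iff_Ici, ContinuousWithinAt, ← hright x]
    exact hf.tendsto_nhdsGT x

namespace RTree

variable (T : RTree)

attribute [local instance] RTree.ttop

theorem Boundary.ext {ζ ξ : T.Boundary} (h : ζ.seq = ξ.seq) : ζ = ξ := by
  cases ζ; cases ξ; cases h; rfl

theorem level_seq (ζ : T.Boundary) (m : ℕ) : T.level (ζ.seq m) = m := by
  induction m with
  | zero => rw [ζ.seq_zero, T.level_root]
  | succ m ih => rw [T.level_parent _ _ (ζ.seq_parent m), ih]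

theorem root_le (β : T.E) : T.Le T.root β := by
  induction hβ : T.level β generalizing β with
  | zero =>
    by_contra hne
    obtain ⟨γ, hγ⟩ := Option.isSome_iff_exists.mp (T.parent_isSome β fun h => hne (h ▸ .refl))
    have := T.level_parent β γ hγ
    omega
  | succ L ih =>
    by_cases hroot : β = T.root
    · exact hroot ▸ .refl
    obtain ⟨γ, hγ⟩ := Option.isSome_iff_exists.mp (T.parent_isSome β hroot)
    have := T.level_parent β γ hγ
    exact (ih γ (by omega)).tail hγ

theorem cap_eq_iInf (p : ℝ) (E : Set T.Boundary) :
    T.cap p E = ⨅ (f : T.E → ℝ≥0∞) (_ : ∀ ζ ∈ E, 1 ≤ ∑' m, f (ζ.seq m)), ∑' β, f β ^ p := by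
  have htent : T.tentE T.root = Set.univ := Set.eq_univ_of_forall T.root_le
  simp only [cap, relCap, relPot, relEnergy, htent, Set.indicator_univ, Set.mem_ofPred_eq]

variable {T}

theorem cap_le {p : ℝ} {E : Set T.Boundary} (f : T.E → ℝ≥0∞)
    (hf : ∀ ζ ∈ E, 1 ≤ ∑' m, f (ζ.seq m)) : T.cap p E ≤ ∑' β, f β ^ p := by
  rw [cap_eq_iInf]
  exact iInf₂_le f hf

theorem cap_mono {p : ℝ} {E F : Set T.Boundary} (h : E ⊆ F) : T.cap p E ≤ T.cap p F := by
  simp only [cap_eq_iInf]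
  exact iInf_mono fun f => iInf_mono' fun hf => ⟨fun ζ hζ => hf ζ (h hζ), le_rfl⟩

theorem cap_empty {p : ℝ} (hp : 0 < p) : T.cap p ∅ = 0 :=
  nonpos_iff_eq_zero.mp <| (cap_le 0 (by simp)).trans_eq (by simp [ENNReal.zero_rpow_of_pos hp])

theorem cap_union_le (p : ℝ) (A B : Set T.Boundary) :
    T.cap p (A ∪ B) ≤ T.cap p A + T.cap p B := by
  simp only [T.cap_eq_iInf p A, T.cap_eq_iInf p B, ENNReal.iInf_add, ENNReal.add_iInf]
  refine le_iInf₂ fun g hg => le_iInf₂ fun f hf => ?_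
  have hmax : ∀ β, max (f β) (g β) ^ p ≤ f β ^ p + g β ^ p := fun β => by
    rcases le_total (f β) (g β) with h | h
    · rw [max_eq_right h]; exact le_add_self
    · rw [max_eq_left h]; exact le_self_add
  calc T.cap p (A ∪ B) ≤ ∑' β, max (f β) (g β) ^ p := by
        refine cap_le _ fun ζ hζ => ?_
        rcases hζ with hζ | hζ
        · exact (hf ζ hζ).trans (ENNReal.tsum_le_tsum fun m => le_max_left _ _)
        · exact (hg ζ hζ).trans (ENNReal.tsum_le_tsum fun m => le_max_right _ _)
    _ ≤ ∑' β, (f β ^ p + g β ^ p) := ENNReal.tsum_le_tsum hmax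
    _ = ∑' β, f β ^ p + ∑' β, g β ^ p := ENNReal.tsum_add

theorem cap_singleton_le_inv_rpow {p : ℝ} (hp : 0 < p) (ζ : T.Boundary) {m : ℕ} (hm : m ≠ 0) :
    T.cap p {ζ} ≤ (m : ℝ≥0∞)⁻¹ ^ (p - 1) := by
  classical
  have hm0 : (m : ℝ≥0∞) ≠ 0 := Nat.cast_ne_zero.mpr hm
  set F := (Finset.range m).image ζ.seq
  set f : T.E → ℝ≥0∞ := fun β => if β ∈ F then (m : ℝ≥0∞)⁻¹ else 0
  have hadm : ∀ ξ ∈ ({ζ} : Set T.Boundary), 1 ≤ ∑' k, f (ξ.seq k) := by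
    rintro ξ rfl
    calc (1 : ℝ≥0∞) = ∑ k ∈ Finset.range m, f (ξ.seq k) := by
          rw [Finset.sum_congr rfl fun k hk => if_pos (Finset.mem_image_of_mem _ hk),
            Finset.sum_const, Finset.card_range, nsmul_eq_mul,
            ENNReal.mul_inv_cancel hm0 (ENNReal.natCast_ne_top m)]
      _ ≤ ∑' k, f (ξ.seq k) := ENNReal.sum_le_tsum _
  calc T.cap p {ζ} ≤ ∑' β, f β ^ p := cap_le f hadm
    _ = ∑ β ∈ F, (m : ℝ≥0∞)⁻¹ ^ p := by
        rw [tsum_eq_sum (s := F) fun β hβ => by simp [f, hβ, ENNReal.zero_rpow_of_pos hp]]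
        exact Finset.sum_congr rfl fun β hβ => by simp [f, hβ]
    _ ≤ m * (m : ℝ≥0∞)⁻¹ ^ p := by
        rw [Finset.sum_const, nsmul_eq_mul]
        gcongr
        exact_mod_cast Finset.card_image_le.trans (Finset.card_range m).le
    _ = (m : ℝ≥0∞)⁻¹ ^ (p - 1) := by
        rw [ENNReal.rpow_sub _ _ (ENNReal.inv_ne_zero.mpr (ENNReal.natCast_ne_top m))
          (ENNReal.inv_ne_top.mpr hm0), ENNReal.rpow_one, div_eq_mul_inv, inv_inv, mul_comm]

theorem cap_singleton {p : ℝ} (hp : 1 < p) (ζ : T.Boundary) : T.cap p {ζ} = 0 := by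
  have hlim : Tendsto (fun m : ℕ => (m : ℝ≥0∞)⁻¹ ^ (p - 1)) atTop (𝓝 0) := by
    have := (ENNReal.continuous_rpow_const (y := p - 1)).tendsto 0
    rw [ENNReal.zero_rpow_of_pos (by linarith)] at this
    exact this.comp ENNReal.tendsto_inv_nat_nhds_zero
  refine nonpos_iff_eq_zero.mp (ge_of_tendsto hlim ?_)
  filter_upwards [eventually_ne_atTop 0] with m hm
  exact cap_singleton_le_inv_rpow (by linarith) ζ hm

theorem cap_eq_zero_of_subsingleton {p : ℝ} (hp : 1 < p) {E : Set T.Boundary}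
    (hE : E.Subsingleton) : T.cap p E = 0 := by
  rcases hE.eq_empty_or_singleton with rfl | ⟨ζ, rfl⟩
  · exact cap_empty (by linarith)
  · exact cap_singleton hp ζ

theorem isOpen_setOf_seq_eq (m : ℕ) (α : T.E) : IsOpen {ζ : T.Boundary | ζ.seq m = α} := by
  by_cases hα : T.level α = m
  · have htent : {ζ : T.Boundary | ζ.seq m = α} = T.tentB α := by
      ext ζ
      refine ⟨fun h => ⟨m, h⟩, fun ⟨j, hj⟩ => ?_⟩
      obtain rfl : j = m := (T.level_seq ζ j).symm.trans (hj ▸ hα)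
      exact hj
    rw [htent]
    exact TopologicalSpace.isOpen_generateFrom_of_mem ⟨α, rfl⟩
  · convert isOpen_empty
    exact Set.eq_empty_of_forall_notMem fun ζ h => hα (h ▸ T.level_seq ζ m)

theorem isLocallyConstant_seq (m : ℕ) : IsLocallyConstant fun ζ : T.Boundary => ζ.seq m :=
  fun s => by
    rw [← Set.biUnion_of_singleton s, Set.preimage_iUnion₂]
    exact isOpen_biUnion fun α _ => isOpen_setOf_seq_eq m α

theorem continuous_of_isLocallyConstant_seq {X : Type*} [TopologicalSpace X] {φ : X → T.Boundary}
    (h : ∀ m, IsLocallyConstant fun x => (φ x).seq m) : Continuous φ := by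
  refine continuous_generateFrom_iff.mpr ?_
  rintro _ ⟨α, rfl⟩
  have : φ ⁻¹' T.tentB α = ⋃ m, (fun x => (φ x).seq m) ⁻¹' {α} := by ext; simp [tentB]
  rw [this]
  exact isOpen_iUnion fun m => h m {α}

theorem lowerSemicontinuous_potential (f : T.E → ℝ≥0∞) :
    LowerSemicontinuous fun ζ : T.Boundary => ∑' m, f (ζ.seq m) :=
  lowerSemicontinuous_tsum fun m =>
    ((isLocallyConstant_seq m).comp f).continuous.lowerSemicontinuous

theorem cap_image_iInter {X : Type*} [TopologicalSpace X] [CompactSpace X] {φ : X → T.Boundary}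
    {p : ℝ} (hp : 0 ≤ p) (hφ : Continuous φ) {C : ℕ → Set X} (hC : ∀ k, IsClosed (C k))
    (hanti : Antitone C) : T.cap p (φ '' ⋂ k, C k) = ⨅ k, T.cap p (φ '' C k) := by
  refine le_antisymm (le_iInf fun k => cap_mono (Set.image_mono (Set.iInter_subset C k))) ?_
  rw [T.cap_eq_iInf p (φ '' _)]
  refine le_iInf₂ fun f hf => ?_
  -- The potential is lower semicontinuous, so `{1 < I(s • f)}` is an open neighbourhood of
  -- `⋂ k, C k` for `s > 1`; by compactness it contains some `C k`, where `s • f` is admissible.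
  have hscaled : ∀ s : ℝ≥0∞, 1 < s → ⨅ k, T.cap p (φ '' C k) ≤ s ^ p * ∑' β, f β ^ p := by
    intro s hs
    set U := φ ⁻¹' {ζ | 1 < ∑' m, s * f (ζ.seq m)}
    have hU : IsOpen U :=
      ((lowerSemicontinuous_potential fun β => s * f β).isOpen_preimage 1).preimage hφ
    have hsub : ⋂ k, C k ⊆ U := fun x hx => by
      simp only [U, Set.mem_preimage, Set.mem_ofPred_eq, ENNReal.tsum_mul_left]
      calc 1 < s := hs
        _ = s * 1 := (mul_one s).symm
        _ ≤ s * ∑' m, f ((φ x).seq m) := mul_le_mul_right (hf _ (Set.mem_image_of_mem φ hx)) s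
    obtain ⟨k, hk⟩ := exists_subset_nhds_of_isCompact' hanti.directed_ge
      (fun k => (hC k).isCompact) hC fun x hx => hU.mem_nhds (hsub hx)
    calc ⨅ k, T.cap p (φ '' C k) ≤ T.cap p (φ '' C k) := iInf_le _ k
      _ ≤ ∑' β, (s * f β) ^ p := cap_le _ (by rintro _ ⟨x, hx, rfl⟩; exact (hk hx).le)
      _ = s ^ p * ∑' β, f β ^ p := by
          simp_rw [ENNReal.mul_rpow_of_nonneg _ _ hp]
          exact ENNReal.tsum_mul_left
  have hlim : Tendsto (fun s : ℝ≥0∞ => s ^ p * ∑' β, f β ^ p) (𝓝 1)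
      (𝓝 (∑' β, f β ^ p)) := by
    simpa using ENNReal.Tendsto.mul_const (ENNReal.continuous_rpow_const.tendsto 1)
      (Or.inl (by simp))
  have : (𝓝[>] (1 : ℝ≥0∞)).NeBot :=
    nhdsGT_neBot_of_exists_gt ⟨⊤, ENNReal.one_lt_top⟩
  exact ge_of_tendsto (hlim.mono_left nhdsWithin_le_nhds)
    (eventually_nhdsWithin_of_forall (s := Set.Ioi 1) hscaled)

section Coding

variable {n : ℕ} (e : ∀ α : T.E, {β // T.parent β = some α} ≃ Fin n)

def childSeq (ω : ℕ → Fin n) : ℕ → T.E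
  | 0 => T.root
  | k + 1 => ((e (childSeq ω k)).symm (ω k)).1

def ofCode (ω : ℕ → Fin n) : T.Boundary :=
  ⟨childSeq e ω, rfl, fun _ => ((e _).symm _).2⟩

theorem isLocallyConstant_childSeq (k : ℕ) : IsLocallyConstant fun ω => childSeq e ω k := by
  induction k with
  | zero => exact IsLocallyConstant.const _
  | succ k ih =>
    exact ih.comp₂ ((IsLocallyConstant.iff_continuous _).mpr (continuous_apply k))
      fun α i => ((e α).symm i).1

theorem continuous_ofCode : Continuous (ofCode e) :=
  continuous_of_isLocallyConstant_seq (isLocallyConstant_childSeq e)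

theorem ofCode_surjective : Function.Surjective (ofCode e) := fun ζ => by
  refine ⟨fun k => e (ζ.seq k) ⟨ζ.seq (k + 1), ζ.seq_parent k⟩, Boundary.ext _ (funext fun k => ?_)⟩
  induction k with
  | zero => exact ζ.seq_zero.symm
  | succ k ih =>
    simp only [ofCode, childSeq] at ih ⊢
    rw [ih, Equiv.symm_apply_apply]

end Coding

section Sweep

variable {X : Type*} {φ : X → T.Boundary} {v : X → ℝ} {p : ℝ}

theorem monotone_cap_image_preimage_Iic :
    Monotone fun x => T.cap p (φ '' (v ⁻¹' Set.Iic x)) :=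
  fun _ _ h => cap_mono (Set.image_mono (Set.preimage_mono (Set.Iic_subset_Iic.mpr h)))

variable [TopologicalSpace X] [CompactSpace X]

theorem sInf_cap_image_preimage_Ioi (hp : 0 ≤ p) (hφ : Continuous φ) (hv : Continuous v)
    (x : ℝ) : sInf ((fun y => T.cap p (φ '' (v ⁻¹' Set.Iic y))) '' Set.Ioi x) =
      T.cap p (φ '' (v ⁻¹' Set.Iic x)) := by
  refine le_antisymm ?_
    (le_sInf <| by rintro _ ⟨y, hy, rfl⟩; exact monotone_cap_image_preimage_Iic hy.le)
  obtain ⟨u, hu_anti, hu_gt, hu_lim⟩ := exists_seq_strictAnti_tendsto x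
  have hinter : ⋂ k, v ⁻¹' Set.Iic (u k) = v ⁻¹' Set.Iic x := by
    ext ω
    simp only [Set.mem_iInter, Set.mem_preimage, Set.mem_Iic]
    exact ⟨fun h => ge_of_tendsto' hu_lim h, fun h k => h.trans (hu_gt k).le⟩
  calc _ ≤ ⨅ k, T.cap p (φ '' (v ⁻¹' Set.Iic (u k))) := le_iInf fun k =>
        sInf_le (Set.mem_image_of_mem (fun y => T.cap p (φ '' (v ⁻¹' Set.Iic y))) (hu_gt k))
    _ = T.cap p (φ '' (v ⁻¹' Set.Iic x)) := by
      rw [← cap_image_iInter hp hφ (fun k => isClosed_Iic.preimage hv)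
        fun i j h => Set.preimage_mono (Set.Iic_subset_Iic.mpr (hu_anti.antitone h)), hinter]

theorem sSup_cap_image_preimage_Iio (hp : 1 < p) (hφ : Continuous φ) (hv : Continuous v)
    (hv_inj : Function.Injective v) (x : ℝ) :
    sSup ((fun y => T.cap p (φ '' (v ⁻¹' Set.Iic y))) '' Set.Iio x) =
      T.cap p (φ '' (v ⁻¹' Set.Iic x)) := by
  refine le_antisymm
    (sSup_le <| by rintro _ ⟨y, hy, rfl⟩; exact monotone_cap_image_preimage_Iic hy.le) ?_
  obtain ⟨u, hu_mono, hu_lt, hu_lim⟩ := exists_seq_strictMono_tendsto x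
  set C := fun k => v ⁻¹' Set.Icc (u k) x
  have hinter : ⋂ k, C k = v ⁻¹' {x} := by
    ext ω
    simp only [C, Set.mem_iInter, Set.mem_preimage, Set.mem_Icc, Set.mem_singleton_iff]
    refine ⟨fun h => le_antisymm (h 0).2 (le_of_tendsto' hu_lim fun k => (h k).1), ?_⟩
    rintro h k
    exact ⟨h ▸ (hu_lt k).le, h.le⟩
  have hfiber : ⨅ k, T.cap p (φ '' C k) = 0 := by
    rw [← cap_image_iInter (by linarith) hφ (fun k => isClosed_Icc.preimage hv)
      fun i j h => Set.preimage_mono (Set.Icc_subset_Icc_left (hu_mono.monotone h)), hinter]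
    exact cap_eq_zero_of_subsingleton hp ((Set.subsingleton_singleton.preimage hv_inj).image φ)
  set S := sSup ((fun y => T.cap p (φ '' (v ⁻¹' Set.Iic y))) '' Set.Iio x)
  have hsplit : ∀ k, T.cap p (φ '' (v ⁻¹' Set.Iic x)) ≤ S + T.cap p (φ '' C k) := fun k =>
    calc _ ≤ T.cap p (φ '' (v ⁻¹' Set.Iic (u k)) ∪ φ '' C k) := by
          refine cap_mono ?_
          rintro _ ⟨ω, hω, rfl⟩
          rcases le_total (v ω) (u k) with h | h
          · exact Or.inl ⟨ω, h, rfl⟩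
          · exact Or.inr ⟨ω, ⟨h, hω⟩, rfl⟩
      _ ≤ T.cap p (φ '' (v ⁻¹' Set.Iic (u k))) + T.cap p (φ '' C k) := cap_union_le p _ _
      _ ≤ S + T.cap p (φ '' C k) := by gcongr; exact le_sSup ⟨u k, hu_lt k, rfl⟩
  calc _ ≤ ⨅ k, (S + T.cap p (φ '' C k)) := le_iInf hsplit
    _ = S := by rw [← ENNReal.add_iInf, hfiber, add_zero]

theorem exists_isCompact_cap_eq (hp : 1 < p) (hφ : Continuous φ)
    (hφ_surj : Function.Surjective φ) (hv : Continuous v) (hv_inj : Function.Injective v)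
    {c : ℝ≥0∞} (hc : c ≤ T.cap p Set.univ) : ∃ K : Set T.Boundary, IsCompact K ∧ T.cap p K = c := by
  set g := fun x => T.cap p (φ '' (v ⁻¹' Set.Iic x))
  have hg : Continuous g :=
    monotone_cap_image_preimage_Iic.continuous_of_sSup_Iio_of_sInf_Ioi
      (sSup_cap_image_preimage_Iio hp hφ hv hv_inj)
      (sInf_cap_image_preimage_Ioi (by linarith) hφ hv)
  obtain ⟨a, ha⟩ := (isCompact_range hv).bddBelow
  obtain ⟨b, hb⟩ := (isCompact_range hv).bddAbove
  have hga : g (a - 1) = 0 := by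
    have : v ⁻¹' Set.Iic (a - 1) = ∅ := Set.eq_empty_of_forall_notMem fun ω hω => by
      have := ha ⟨ω, rfl⟩
      simp only [Set.mem_preimage, Set.mem_Iic] at hω
      linarith
    simp only [g, this, Set.image_empty, cap_empty (show 0 < p by linarith)]
  have hgb : g b = T.cap p Set.univ := by
    have : v ⁻¹' Set.Iic b = Set.univ := Set.eq_univ_of_forall fun ω => hb ⟨ω, rfl⟩
    simp only [g, this, Set.image_univ, hφ_surj.range_eq]
  have hc' : c ∈ Set.uIcc (g (a - 1)) (g b) := by
    rw [hga, hgb]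
    exact Set.mem_uIcc_of_le zero_le hc
  obtain ⟨x, -, hx⟩ := intermediate_value_uIcc hg.continuousOn hc'
  exact ⟨_, (isClosed_Iic.preimage hv).isCompact.image hφ, hx⟩

end Sweep

end RTree

theorem stmt10_general (T : RTree) (p : ℝ) (hp : 1 < p) (n : ℕ)
    (hhom : ∀ α : T.E, Nat.card {β : T.E // T.parent β = some α} = n)
    (t : ℝ) (ht1 : t ≤ (T.cap p Set.univ).toReal) :
    ∃ K : Set T.Boundary, @IsCompact _ T.ttop K ∧ T.cap p K = ENNReal.ofReal t := by
  have e : ∀ α : T.E, {β // T.parent β = some α} ≃ Fin n := fun α => by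
    have : Finite {β // T.parent β = some α} := (T.locFin α).to_subtype
    exact Finite.equivFinOfCardEq (hhom α)
  exact T.exists_isCompact_cap_eq hp (T.continuous_ofCode e) (T.ofCode_surjective e)
    (Real.continuous_ofDigits_castSucc n) (Real.injective_ofDigits_castSucc n)
    (ENNReal.ofReal_le_of_le_toReal ht1)

/-- For the homogeneous tree `T^n` of branching number `n` and any real
`t ∈ [0, c_p(∂T^n)]`, there is a compact subset `K_t ⊆ ∂T^n` with `c_p(K_t) = t`. -/
theorem stmt10 (T : RTree) (p : ℝ) (hp : 1 < p) (n : ℕ) (hn : 1 ≤ n)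
    (hhom : ∀ α : T.E, Nat.card {β : T.E // T.parent β = some α} = n)
    (t : ℝ) (ht0 : 0 ≤ t) (ht1 : t ≤ (T.cap p Set.univ).toReal) :
    ∃ K : Set T.Boundary, @IsCompact _ T.ttop K ∧ T.cap p K = ENNReal.ofReal t :=
  stmt10_general T p hp n hhom t ht1
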